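/- Let e : ι → H and f : κ → H be orthonormal bases of H (ι, κ finite types), with associated classical structures δ_e and δ_f. Then the following are equivalent: (i) every subspace K of H that is copyable along both δ_e and δ_f satisfies K = ⊥ or K = ⊤ (i.e. δ_e and δ_f are partially complementary); (ii) every subspace that is simultaneously the span of a subset of { e i | i : ι } and the span of a subset of { f j | j : κ } equals ⊥ or ⊤ (i.e. the Boolean algebras of copyable subspaces are partially complementary). -/

import Mathlib

open scoped TensorProduct InnerProductSpace

/-- The orthogonal projection of `H` onto the subspace `K`, regarded as an endomorphism
`P_K : H →ₗ[ℂ] H`. -/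
noncomputable def projL {H : Type*} [NormedAddCommGroup H] [InnerProductSpace ℂ H]
    [FiniteDimensional ℂ H] (K : Submodule ℂ H) : H →ₗ[ℂ] H :=
  K.subtype ∘ₗ K.orthogonalProjectionOnto.toLinearMap

/-- The classical structure `δ_e : H →ₗ[ℂ] H ⊗[ℂ] H` associated with an orthonormal basis
`e`, determined by `δ_e x = ∑ i, ⟪e i, x⟫_ℂ • (e i ⊗ₜ e i)`. -/
noncomputable def delta {ι H : Type*} [Fintype ι] [NormedAddCommGroup H]
    [InnerProductSpace ℂ H] (e : ι → H) : H →ₗ[ℂ] H ⊗[ℂ] H :=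
  ∑ i, (innerSL ℂ (e i)).toLinearMap.smulRight (e i ⊗ₜ[ℂ] e i)

/-- A subspace `K` of `H` is copyable along `δ_e` if `δ_e ∘ₗ P_K = (P_K ⊗ P_K) ∘ₗ δ_e`. -/
def Copyable {ι H : Type*} [Fintype ι] [NormedAddCommGroup H] [InnerProductSpace ℂ H]
    [FiniteDimensional ℂ H] (e : ι → H) (K : Submodule ℂ H) : Prop :=
  delta e ∘ₗ projL K = TensorProduct.map (projL K) (projL K) ∘ₗ delta e

/-!
A subspace `K` is copyable along `δ_e` exactly when it is spanned by a subset of `e`, so the two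
conditions quantify over the same subspaces. Evaluated at `e i`, copyability says that
`P_K (e i)` is a copyable vector of `δ_e`; comparing coefficients in the basis `e j ⊗ e k` shows
that these are `0` and the basis vectors. Since `⟪e i, P_K (e i)⟫ = ‖P_K (e i)‖²`, the value
`e j` forces `j = i`. Thus `P_K` fixes or kills each `e i`, and `K` is the span of the fixed ones.
-/

section

variable {ι H : Type*} [NormedAddCommGroup H] [InnerProductSpace ℂ H]

lemma Orthonormal.eq_of_starProjection_apply_eq {v : ι → H} (hv : Orthonormal ℂ v)
    (K : Submodule ℂ H) [K.HasOrthogonalProjection] {i j : ι}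
    (h : K.starProjection (v i) = v j) : i = j := by
  have hproj : ⟪v j, v i⟫_ℂ = ⟪v j, v j⟫_ℂ := by
    rw [← h, K.inner_starProjection_left_eq_right, K.inner_starProjection_left_eq_right,
      Submodule.starProjection_eq_self_iff.mpr (K.starProjection_apply_mem _)]
  by_contra hij
  simp [hv.inner_eq_zero (Ne.symm hij), inner_self_eq_norm_sq_to_K, hv.1 j] at hproj

open Classical in
lemma Orthonormal.starProjection_span_image_apply {v : ι → H} (hv : Orthonormal ℂ v) (S : Set ι)
    [(Submodule.span ℂ (v '' S)).HasOrthogonalProjection] (i : ι) :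
    (Submodule.span ℂ (v '' S)).starProjection (v i) = if i ∈ S then v i else 0 := by
  split_ifs with hi
  · exact Submodule.starProjection_eq_self_iff.mpr (Submodule.subset_span ⟨i, hi, rfl⟩)
  · refine Submodule.starProjection_apply_eq_zero_iff _ |>.mpr ?_
    refine (Submodule.isOrtho_span.mpr ?_).ge (Submodule.mem_span_singleton_self (v i))
    rintro _ ⟨j, hj, rfl⟩ _ rfl
    exact hv.inner_eq_zero (ne_of_mem_of_not_mem hj hi)

variable [Fintype ι]

lemma delta_apply (e : ι → H) (x : H) : delta e x = ∑ i, ⟪e i, x⟫_ℂ • (e i ⊗ₜ[ℂ] e i) := by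
  simp [delta, LinearMap.sum_apply]

lemma delta_apply_basis (e : OrthonormalBasis ι ℂ H) (i : ι) :
    delta e (e i) = e i ⊗ₜ[ℂ] e i := by
  classical
  simp [delta_apply, orthonormal_iff_ite.mp e.orthonormal]

lemma repr_delta_apply [DecidableEq ι] (e : OrthonormalBasis ι ℂ H) (x : H) (j k : ι) :
    (e.toBasis.tensorProduct e.toBasis).repr (delta e x) (j, k) =
      if j = k then e.repr x j else 0 := by
  simp [delta_apply, Module.Basis.tensorProduct_repr_tmul_apply, e.coe_toBasis_repr_apply,
    Finsupp.finsetSum_apply, e.repr_apply_apply, eq_comm]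

lemma delta_eq_tmul_self_iff (e : OrthonormalBasis ι ℂ H) {x : H} :
    delta e x = x ⊗ₜ[ℂ] x ↔ x = 0 ∨ ∃ j, x = e j := by
  classical
  refine ⟨fun h => ?_, ?_⟩
  · have hc : ∀ j k, (if j = k then e.repr x j else 0) = e.repr x j * e.repr x k := by
      intro j k
      rw [← repr_delta_apply, h, Module.Basis.tensorProduct_repr_tmul_apply,
        e.coe_toBasis_repr_apply, e.coe_toBasis_repr_apply, smul_eq_mul, mul_comm]
    by_cases hx : x = 0
    · exact Or.inl hx
    obtain ⟨j, hj⟩ : ∃ j, e.repr x j ≠ 0 := by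
      by_contra! hzero
      exact hx (e.repr.injective (by ext j; simp [hzero]))
    have hcj : e.repr x j = 1 := by
      have := hc j j
      rw [if_pos rfl] at this
      exact (mul_eq_left₀ hj).mp this.symm
    refine Or.inr ⟨j, e.repr.injective ?_⟩
    ext k
    rw [e.repr_self, PiLp.single_apply]
    split_ifs with hkj
    · rw [hkj]; exact hcj
    · simpa [hkj, Ne.symm hkj, hcj] using (hc j k).symm
  · rintro (rfl | ⟨j, rfl⟩)
    · simp
    · exact delta_apply_basis e j

lemma delta_comp_eq_map_comp_delta_iff (e : OrthonormalBasis ι ℂ H) (P : H →ₗ[ℂ] H) :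
    delta e ∘ₗ P = TensorProduct.map P P ∘ₗ delta e ↔
      ∀ i, delta e (P (e i)) = P (e i) ⊗ₜ[ℂ] P (e i) := by
  refine ⟨fun h i => ?_, fun h => e.toBasis.ext fun i => ?_⟩
  · simpa [delta_apply_basis] using LinearMap.congr_fun h (e i)
  · simpa [delta_apply_basis] using h i

lemma projL_apply [FiniteDimensional ℂ H] (K : Submodule ℂ H) (x : H) :
    projL K x = K.starProjection x :=
  rfl

lemma copyable_iff_forall_starProjection_apply [FiniteDimensional ℂ H]
    (e : OrthonormalBasis ι ℂ H) (K : Submodule ℂ H) :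
    Copyable e K ↔ ∀ i, K.starProjection (e i) = 0 ∨ K.starProjection (e i) = e i := by
  refine (delta_comp_eq_map_comp_delta_iff e (projL K)).trans (forall_congr' fun i => ?_)
  rw [delta_eq_tmul_self_iff, projL_apply]
  refine or_congr_right ⟨?_, fun h => ⟨i, h⟩⟩
  rintro ⟨j, hj⟩
  rwa [← e.orthonormal.eq_of_starProjection_apply_eq K hj] at hj

lemma eq_span_image_of_forall_starProjection_apply (e : OrthonormalBasis ι ℂ H)
    (K : Submodule ℂ H) [K.HasOrthogonalProjection]
    (h : ∀ i, K.starProjection (e i) = 0 ∨ K.starProjection (e i) = e i) :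
    K = Submodule.span ℂ (e '' {i | K.starProjection (e i) = e i}) := by
  refine le_antisymm (fun x hx => ?_) (Submodule.span_le.mpr ?_)
  · rw [← Submodule.starProjection_eq_self_iff.mpr hx, ← e.sum_repr' x, map_sum]
    refine Submodule.sum_mem _ fun i _ => ?_
    rw [map_smul]
    refine Submodule.smul_mem _ _ ?_
    rcases h i with h0 | h1
    · rw [h0]; exact Submodule.zero_mem _
    · rw [h1]; exact Submodule.subset_span ⟨i, h1, rfl⟩
  · rintro _ ⟨i, hi, rfl⟩
    exact Submodule.starProjection_eq_self_iff.mp hi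

lemma copyable_iff_exists_eq_span_image [FiniteDimensional ℂ H] (e : OrthonormalBasis ι ℂ H)
    (K : Submodule ℂ H) :
    Copyable e K ↔ ∃ S : Set ι, K = Submodule.span ℂ (e '' S) := by
  classical
  rw [copyable_iff_forall_starProjection_apply]
  refine ⟨fun h => ⟨_, eq_span_image_of_forall_starProjection_apply e K h⟩, ?_⟩
  rintro ⟨S, rfl⟩ i
  rw [e.orthonormal.starProjection_span_image_apply]
  split_ifs <;> simp

end

/-- Two classical structures `δ_e` and `δ_f` are partially complementary (no nontrivial
subspace is copyable along both) if and only if their Boolean algebras of copyable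
subspaces (the spans of subsets of the respective bases) are partially complementary
(have trivial intersection). -/
theorem partially_complementary_iff_boolean_partially_complementary
    {ι κ H : Type*} [Fintype ι] [Fintype κ] [NormedAddCommGroup H] [InnerProductSpace ℂ H]
    [FiniteDimensional ℂ H] (e : OrthonormalBasis ι ℂ H) (f : OrthonormalBasis κ ℂ H) :
    (∀ K : Submodule ℂ H, Copyable (⇑e) K → Copyable (⇑f) K → K = ⊥ ∨ K = ⊤) ↔
      (∀ K : Submodule ℂ H,
        (∃ S : Set ι, K = Submodule.span ℂ (⇑e '' S)) →
        (∃ T : Set κ, K = Submodule.span ℂ (⇑f '' T)) →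
        K = ⊥ ∨ K = ⊤) := by
  simp only [copyable_iff_exists_eq_span_image]
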